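/- Let φ, φ' be unit vectors in ℂ^d, let δ ≥ 0, and let N_{(i,x)} for i, x ∈ {0,1} be positive semidefinite d×d matrices with Σ_{i,x∈{0,1}} N_{(i,x)} = I. Assume that for each x ∈ {0,1} the product of quadratic forms satisfies ⟨φ, N_{(1,x)} φ⟩ · ⟨φ', N_{(1,x)} φ'⟩ ≤ δ/2. For i ∈ {0,1} define the 2×2 matrix ρ^{(i)} with diagonal entries ρ^{(i)}₀₀ = ρ^{(i)}₁₁ = 1/2, off-diagonal entry ρ^{(i)}₀₁ = Σ_{x∈{0,1}} ⟨φ', N_{(i,x)} φ⟩ and ρ^{(i)}₁₀ its complex conjugate. Then Δ(ρ^{(0)}, ρ^{(1)}) ≥ |⟨φ', φ⟩| − 2√(2δ). -/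

import Mathlib

open Matrix Kronecker ComplexOrder

/-- The positive semidefinite square root, as `Matrix.PosSemidef.sqrt` was defined in the older
Mathlib (removed since). -/
noncomputable def Matrix.PosSemidef.sqrt {n : Type*} [Fintype n] [DecidableEq n]
    {A : Matrix n n ℂ} (hA : A.PosSemidef) : Matrix n n ℂ :=
  hA.1.eigenvectorUnitary.1 * diagonal ((↑) ∘ (hA.1.eigenvalues · |>.sqrt)) *
    (star hA.1.eigenvectorUnitary : Matrix n n ℂ)

/-- The trace norm `‖A‖₁ = Tr √(Aᴴ A)` of a complex matrix. -/
noncomputable def traceNorm {n : Type*} [Fintype n] [DecidableEq n] (A : Matrix n n ℂ) : ℝ :=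
  ((Matrix.posSemidef_conjTranspose_mul_self A).sqrt.trace).re

/-- The trace distance `Δ(ρ,σ) = ‖ρ - σ‖₁ / 2`. -/
noncomputable def traceDist {n : Type*} [Fintype n] [DecidableEq n] (ρ σ : Matrix n n ℂ) : ℝ :=
  traceNorm (ρ - σ) / 2

open scoped Classical in
/-- Positive semidefinite square root (junk value `0` on non-PSD matrices). -/
noncomputable def psdSqrt {n : Type*} [Fintype n] [DecidableEq n] (A : Matrix n n ℂ) :
    Matrix n n ℂ :=
  if h : A.PosSemidef then h.sqrt else 0

/-- The fidelity `F(ρ,σ) = ‖√ρ √σ‖₁`. -/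
noncomputable def fidelity {n : Type*} [Fintype n] [DecidableEq n] (ρ σ : Matrix n n ℂ) : ℝ :=
  traceNorm (psdSqrt ρ * psdSqrt σ)

/-- A density matrix: positive semidefinite with trace 1. -/
def IsDensityMatrix {n : Type*} [Fintype n] [DecidableEq n] (ρ : Matrix n n ℂ) : Prop :=
  ρ.PosSemidef ∧ ρ.trace = 1

/-- The projector `|b⟩⟨b|` on ℂ². -/
noncomputable def proj (b : Bool) : Matrix Bool Bool ℂ := Matrix.single b b 1

/-- The strong oblivious transfer channel `F_{(x₀,x₁)}`. -/
noncomputable def sotChannel (x₀ x₁ : Bool) (ρ : Matrix (Bool × Bool) (Bool × Bool) ℂ) :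
    Matrix (Bool × Bool) (Bool × Bool) ℂ :=
  ∑ i : Bool, ∑ i' : Bool,
    ρ (i, i') (i, i') •
      (((1/2 : ℂ) • (1 : Matrix Bool Bool ℂ)) ⊗ₖ proj (xor (bif xor i i' then x₁ else x₀) i'))

/-!
The two states differ only off the diagonal, so their trace distance is `‖c₀ - c₁‖`, where
`cᵢ = ∑ₓ ⟨φ', N_{(i,x)} φ⟩`. Since the `N_{(i,x)}` sum to the identity, `c₀ + c₁ = ⟨φ', φ⟩`,
and the Cauchy–Schwarz inequality for the semi-inner products `⟨·, N_{(1,x)} ·⟩` turns the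
hypothesis into `‖c₁‖ ≤ √(2δ)`. The triangle inequality for `c₀ + c₁ = (c₀ - c₁) + 2 c₁`
finishes the proof.
-/

lemma Matrix.PosSemidef.sqrt_eq_smul_one {n : Type*} [Fintype n] [DecidableEq n]
    {A : Matrix n n ℂ} (hA : A.PosSemidef) {r : ℝ} (h : A = (r : ℂ) • 1) :
    hA.sqrt = (√r : ℂ) • 1 := by
  subst h
  have hev : ∀ i, hA.1.eigenvalues i = r := by
    intro i
    have hv := hA.1.eigenvectorBasis.orthonormal.1 i
    rw [hA.1.eigenvalues_eq i, smul_mulVec, one_mulVec, dotProduct_smul, smul_eq_mul,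
      dotProduct_comm, ← EuclideanSpace.inner_eq_star_dotProduct, inner_self_eq_norm_sq_to_K, hv]
    simp
  rw [Matrix.PosSemidef.sqrt, show ((↑) ∘ (hA.1.eigenvalues · |>.sqrt)) = fun _ ↦ (√r : ℂ) from
    funext fun i ↦ by simp [hev], ← smul_one_eq_diagonal, mul_smul_comm, mul_one, smul_mul_assoc,
    ← Unitary.coe_star, Unitary.coe_mul_star_self]

lemma Matrix.PosSemidef.norm_dotProduct_mulVec_sq_le {n 𝕜 : Type*} [Fintype n] [RCLike 𝕜]
    {M : Matrix n n 𝕜} (hM : M.PosSemidef) (u v : n → 𝕜) :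
    ‖star u ⬝ᵥ M *ᵥ v‖ ^ 2 ≤ RCLike.re (star u ⬝ᵥ M *ᵥ u) * RCLike.re (star v ⬝ᵥ M *ᵥ v) := by
  let := M.toSeminormedAddCommGroup hM
  let := M.toInnerProductSpace hM
  have hinner : ∀ x y : n → 𝕜, inner 𝕜 x y = star x ⬝ᵥ M *ᵥ y := fun x y ↦ dotProduct_comm _ _
  have hcs := inner_mul_inner_self_le (𝕜 := 𝕜) u v
  rw [norm_inner_symm v u, ← sq] at hcs
  simpa only [hinner] using hcs

lemma traceNorm_offDiag_fin_two (c : ℂ) : traceNorm !![0, c; starRingEnd ℂ c, 0] = 2 * ‖c‖ := by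
  have hsq : (!![0, c; starRingEnd ℂ c, 0])ᴴ * !![0, c; starRingEnd ℂ c, 0] =
      ((‖c‖ ^ 2 : ℝ) : ℂ) • 1 := by
    rw [← Complex.normSq_eq_norm_sq, Complex.normSq_eq_conj_mul_self]
    ext i j
    fin_cases i <;> fin_cases j <;> simp [mul_apply, Fin.sum_univ_two, mul_comm]
  rw [traceNorm, PosSemidef.sqrt_eq_smul_one _ hsq, trace_smul, trace_one,
    Real.sqrt_sq (norm_nonneg c)]
  simp [mul_comm]

lemma traceDist_fin_two_eq_norm_sub (a e b c : ℂ) :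
    traceDist !![a, b; starRingEnd ℂ b, e] !![a, c; starRingEnd ℂ c, e] = ‖b - c‖ := by
  have hsub : !![a, b; starRingEnd ℂ b, e] - !![a, c; starRingEnd ℂ c, e] =
      !![0, b - c; starRingEnd ℂ (b - c), 0] := by
    ext i j
    fin_cases i <;> fin_cases j <;> simp
  rw [traceDist, hsub, traceNorm_offDiag_fin_two]
  ring

lemma sum_dotProduct_mulVec_of_sum_eq_one {n ι 𝕜 : Type*} [Fintype n] [DecidableEq n]
    [Fintype ι] [CommSemiring 𝕜] {N : ι → Matrix n n 𝕜} (hN : ∑ p, N p = 1) (u v : n → 𝕜) :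
    ∑ p, u ⬝ᵥ N p *ᵥ v = u ⬝ᵥ v := by
  rw [← dotProduct_sum, ← sum_mulVec, hN, one_mulVec]

theorem stmt_7_general {d : ℕ} (δ : ℝ)
    (φ φ' : Fin d → ℂ)
    (N : Bool × Bool → Matrix (Fin d) (Fin d) ℂ)
    (hN : ∀ p, (N p).PosSemidef)
    (hNsum : ∑ p : Bool × Bool, N p = 1)
    (hsmall : ∀ x : Bool,
      (star φ ⬝ᵥ (N (true, x)).mulVec φ).re *
        (star φ' ⬝ᵥ (N (true, x)).mulVec φ').re ≤ δ / 2) :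
    traceDist
      !![(1/2 : ℂ), ∑ x : Bool, star φ' ⬝ᵥ (N (false, x)).mulVec φ;
         (starRingEnd ℂ) (∑ x : Bool, star φ' ⬝ᵥ (N (false, x)).mulVec φ), (1/2 : ℂ)]
      !![(1/2 : ℂ), ∑ x : Bool, star φ' ⬝ᵥ (N (true, x)).mulVec φ;
         (starRingEnd ℂ) (∑ x : Bool, star φ' ⬝ᵥ (N (true, x)).mulVec φ), (1/2 : ℂ)]
      ≥ ‖star φ' ⬝ᵥ φ‖ - 2 * Real.sqrt (2 * δ) := by
  rw [traceDist_fin_two_eq_norm_sub, ge_iff_le]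
  set c : Bool → Bool → ℂ := fun i x ↦ star φ' ⬝ᵥ N (i, x) *ᵥ φ
  have hsum : ∑ x, c false x + ∑ x, c true x = star φ' ⬝ᵥ φ := by
    rw [← sum_dotProduct_mulVec_of_sum_eq_one hNsum, Fintype.sum_prod_type]
    exact (add_comm _ _).trans (Fintype.sum_bool fun i ↦ ∑ x, c i x).symm
  have hsmall_sq : ∀ x, ‖c true x‖ ^ 2 ≤ δ / 2 := fun x ↦
    ((hN (true, x)).norm_dotProduct_mulVec_sq_le φ' φ).trans ((mul_comm _ _).trans_le (hsmall x))
  have hc₁ : ‖∑ x, c true x‖ ≤ √(2 * δ) := by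
    refine Real.le_sqrt_of_sq_le ?_
    have htri := norm_add_le (c true true) (c true false)
    rw [Fintype.sum_bool]
    nlinarith [hsmall_sq false, hsmall_sq true, norm_nonneg (c true true + c true false),
      sq_nonneg (‖c true false‖ - ‖c true true‖)]
  rw [← hsum]
  have h := norm_sub_norm_le (∑ x, c false x + ∑ x, c true x) (∑ x, c false x - ∑ x, c true x)
  rw [add_sub_sub_cancel, ← two_mul, norm_mul, Complex.norm_two] at h
  linarith

/-- Trace-distance lower bound for the two post-measurement 2×2 states. Here the
index `i ∈ {0,1}` is encoded as `false`/`true`. -/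
theorem stmt_7 {d : ℕ} (δ : ℝ) (hδ : 0 ≤ δ)
    (φ φ' : Fin d → ℂ) (hφ : star φ ⬝ᵥ φ = 1) (hφ' : star φ' ⬝ᵥ φ' = 1)
    (N : Bool × Bool → Matrix (Fin d) (Fin d) ℂ)
    (hN : ∀ p, (N p).PosSemidef)
    (hNsum : ∑ p : Bool × Bool, N p = 1)
    (hsmall : ∀ x : Bool,
      (star φ ⬝ᵥ (N (true, x)).mulVec φ).re *
        (star φ' ⬝ᵥ (N (true, x)).mulVec φ').re ≤ δ / 2) :
    traceDist
      !![(1/2 : ℂ), ∑ x : Bool, star φ' ⬝ᵥ (N (false, x)).mulVec φ;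
         (starRingEnd ℂ) (∑ x : Bool, star φ' ⬝ᵥ (N (false, x)).mulVec φ), (1/2 : ℂ)]
      !![(1/2 : ℂ), ∑ x : Bool, star φ' ⬝ᵥ (N (true, x)).mulVec φ;
         (starRingEnd ℂ) (∑ x : Bool, star φ' ⬝ᵥ (N (true, x)).mulVec φ), (1/2 : ℂ)]
      ≥ ‖star φ' ⬝ᵥ φ‖ - 2 * Real.sqrt (2 * δ) :=
  stmt_7_general δ φ φ' N hN hNsum hsmall
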